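/- Let A and M be vector spaces over a field K of characteristic 0, let μ : A×A → A, l : A×M → M, r : M×A → M be bilinear maps and T : M → A a linear map. Define π on A⊕M by π((a,m),(b,n)) = (μ(a,b), l(a,n)+r(m,b)) and T̂ : A⊕M → A⊕M by T̂(a,m) = (T(m), 0). Then ((A,μ),(M,l,r),T) is a relative Rota–Baxter algebra (i.e. μ is associative, (l,r) is an A-bimodule structure on M, and T satisfies the relative Rota–Baxter identity) if and only if the following two conditions hold for all x,y,z ∈ A⊕M: (i) π(π(x,y),z) = π(x,π(y,z)); (ii) π(T̂x, T̂y) = T̂(π(T̂x, y)) + T̂(π(x, T̂y)). (This is the concrete form of the characterization of relative Rota–Baxter algebras as Maurer–Cartan elements (π[1],T): condition (i) is [π,π] = 0 and condition (ii) is [[π,T],T] = 0.) -/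
import Mathlib

/-!
Statement 4: characterization of relative Rota–Baxter algebras as Maurer–Cartan elements
`(π[1], T)`: the triple `((A,μ),(M,l,r),T)` is a relative Rota–Baxter algebra iff `π` is
associative (i.e. `[π,π] = 0`) and `π(T̂x,T̂y) = T̂(π(T̂x,y)) + T̂(π(x,T̂y))`
(i.e. `[[π,T],T] = 0`).
-/

section

variable {K : Type*} [Field K] [CharZero K]
variable {A M : Type*} [AddCommGroup A] [Module K A] [AddCommGroup M] [Module K M]

/-- The bilinear map `π = μ + l + r` on `A ⊕ M`. -/
def piMap (μ : A →ₗ[K] A →ₗ[K] A) (l : A →ₗ[K] M →ₗ[K] M) (r : M →ₗ[K] A →ₗ[K] M) :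
    A × M → A × M → A × M :=
  fun x y => (μ x.1 y.1, l x.1 y.2 + r x.2 y.1)

/-- The lift `T̂(a,m) = (T(m), 0)` of a linear map `T : M → A` to `A ⊕ M`. -/
def tHat (T : M →ₗ[K] A) : A × M → A × M := fun x => (T x.2, 0)

theorem statement4 (μ : A →ₗ[K] A →ₗ[K] A) (l : A →ₗ[K] M →ₗ[K] M)
    (r : M →ₗ[K] A →ₗ[K] M) (T : M →ₗ[K] A) :
    -- ((A,μ),(M,l,r),T) is a relative Rota–Baxter algebra ...
    ((∀ a b c : A, μ (μ a b) c = μ a (μ b c)) ∧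
      (∀ (a b : A) (m : M), l (μ a b) m = l a (l b m)) ∧
      (∀ (m : M) (a b : A), r (r m a) b = r m (μ a b)) ∧
      (∀ (a : A) (m : M) (b : A), r (l a m) b = l a (r m b)) ∧
      (∀ m n : M, μ (T m) (T n) = T (l (T m) n + r m (T n))))
    -- ... iff (i) and (ii) hold:
    ↔ ((∀ x y z : A × M,
          piMap μ l r (piMap μ l r x y) z = piMap μ l r x (piMap μ l r y z)) ∧
        (∀ x y : A × M,
          piMap μ l r (tHat T x) (tHat T y)
            = tHat T (piMap μ l r (tHat T x) y) + tHat T (piMap μ l r x (tHat T y)))) := by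
  constructor
  · rintro ⟨h1, h2, h3, h4, h5⟩
    constructor
    · intro x y z
      simp only [piMap, Prod.mk.injEq, map_add, LinearMap.add_apply]
      refine ⟨h1 _ _ _, ?_⟩
      rw [h2, h3, h4]
      abel
    · intro x y
      simp only [piMap, tHat, Prod.mk.injEq, map_zero, map_add, LinearMap.zero_apply,
        add_zero, zero_add, Prod.mk_add_mk]
      exact ⟨by rw [h5, map_add], trivial⟩
  · rintro ⟨hi, hii⟩
    refine ⟨?_, ?_, ?_, ?_, ?_⟩
    · intro a b c
      have := hi (a, 0) (b, 0) (c, 0)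
      simpa [piMap, Prod.ext_iff] using congrArg Prod.fst this
    · intro a b m
      have := hi (a, 0) (b, 0) (0, m)
      simpa [piMap, Prod.ext_iff] using congrArg Prod.snd this
    · intro m a b
      have := hi (0, m) (a, 0) (b, 0)
      simpa [piMap, Prod.ext_iff] using congrArg Prod.snd this
    · intro a m b
      have := hi (a, 0) (0, m) (b, 0)
      simpa [piMap, Prod.ext_iff] using congrArg Prod.snd this
    · intro m n
      have := hii (0, m) (0, n)
      simpa [piMap, tHat, Prod.ext_iff] using congrArg Prod.fst this
  end
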